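/- For natural numbers a,b ≥ 1 and k ≥ 0, let P_k(a,b) be the number of simple graphs on the vertex set Fin a × Fin b with exactly k edges that satisfy the degree criterion, let D_i(a,b) be the number of simple graphs on Fin a × Fin b with exactly i edges, all diagonal, that satisfy the degree criterion, and let r(a,b) = a·b·(a+b)/2 − a·b (the number of horizontal and vertical vertex pairs). Then P_k(a,b) = C(r(a,b), k) + ∑_{i=2}^{k} D_i(a,b) · C(r(a,b), k−i), where C denotes the binomial coefficient. -/

import Mathlib

open Matrix

/-- The partial transpose of a grid-labelled graph. -/
def PartialTranspose {a b : ℕ} (G : SimpleGraph (Fin a × Fin b)) :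
    SimpleGraph (Fin a × Fin b) where
  Adj v w := G.Adj (w.1, v.2) (v.1, w.2)
  symm := by
    constructor
    intro v w h
    exact G.adj_symm h
  loopless := by
    constructor
    intro v h
    exact G.irrefl h

/-- The degree criterion, phrased via `Set.ncard` of neighbour sets so that no
decidability assumptions are needed. -/
def DegCrit {a b : ℕ} (G : SimpleGraph (Fin a × Fin b)) : Prop :=
  ∀ v, (G.neighborSet v).ncard = ((PartialTranspose G).neighborSet v).ncard

/-- `Pnum a b k`: the number of simple graphs on `Fin a × Fin b` with exactly `k`
edges that satisfy the degree criterion. -/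
noncomputable def Pnum (a b k : ℕ) : ℕ :=
  Nat.card {G : SimpleGraph (Fin a × Fin b) // G.edgeSet.ncard = k ∧ DegCrit G}

/-- `Dnum a b k`: the number of simple graphs on `Fin a × Fin b` with exactly `k`
edges, all diagonal, that satisfy the degree criterion. -/
noncomputable def Dnum (a b k : ℕ) : ℕ :=
  Nat.card {G : SimpleGraph (Fin a × Fin b) //
    G.edgeSet.ncard = k ∧ (∀ v w : Fin a × Fin b, G.Adj v w → v.1 ≠ w.1 ∧ v.2 ≠ w.2) ∧
      DegCrit G}


section Aux

variable {a b : ℕ}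

/-- diagonal part of a graph -/
def Dpart (G : SimpleGraph (Fin a × Fin b)) : SimpleGraph (Fin a × Fin b) where
  Adj v w := G.Adj v w ∧ v.1 ≠ w.1 ∧ v.2 ≠ w.2
  symm := ⟨fun v w ⟨h, h1, h2⟩ => ⟨G.adj_symm h, h1.symm, h2.symm⟩⟩
  loopless := ⟨fun v h => G.irrefl h.1⟩

/-- non-diagonal part of a graph -/
def Npart (G : SimpleGraph (Fin a × Fin b)) : SimpleGraph (Fin a × Fin b) where
  Adj v w := G.Adj v w ∧ (v.1 = w.1 ∨ v.2 = w.2)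
  symm := ⟨fun v w ⟨h, h1⟩ => ⟨G.adj_symm h, by tauto⟩⟩
  loopless := ⟨fun v h => G.irrefl h.1⟩

def DiagOnly (G : SimpleGraph (Fin a × Fin b)) : Prop :=
  ∀ v w, G.Adj v w → v.1 ≠ w.1 ∧ v.2 ≠ w.2

def NondiagOnly (G : SimpleGraph (Fin a × Fin b)) : Prop :=
  ∀ v w, G.Adj v w → v.1 = w.1 ∨ v.2 = w.2

lemma diagOnly_Dpart (G : SimpleGraph (Fin a × Fin b)) : DiagOnly (Dpart G) :=
  fun _ _ h => h.2

lemma nondiagOnly_Npart (G : SimpleGraph (Fin a × Fin b)) : NondiagOnly (Npart G) :=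
  fun _ _ h => h.2

lemma Dpart_sup_Npart (G : SimpleGraph (Fin a × Fin b)) : Dpart G ⊔ Npart G = G := by
  ext v w
  simp only [SimpleGraph.sup_adj, Dpart, Npart]
  by_cases h1 : v.1 = w.1 <;> by_cases h2 : v.2 = w.2 <;> tauto

lemma Dpart_sup {D H : SimpleGraph (Fin a × Fin b)} (hD : DiagOnly D) (hH : NondiagOnly H) :
    Dpart (D ⊔ H) = D := by
  ext v w
  simp only [Dpart, SimpleGraph.sup_adj]
  constructor
  · rintro ⟨h | h, hd⟩
    · exact h
    · exact absurd (hH v w h) (by tauto)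
  · intro h
    exact ⟨Or.inl h, hD v w h⟩

lemma Npart_sup {D H : SimpleGraph (Fin a × Fin b)} (hD : DiagOnly D) (hH : NondiagOnly H) :
    Npart (D ⊔ H) = H := by
  ext v w
  simp only [Npart, SimpleGraph.sup_adj]
  constructor
  · rintro ⟨h | h, hd⟩
    · exact absurd (hD v w h) (by tauto)
    · exact h
  · intro h
    exact ⟨Or.inr h, hH v w h⟩

lemma disjoint_edgeSets {D H : SimpleGraph (Fin a × Fin b)} (hD : DiagOnly D)
    (hH : NondiagOnly H) : Disjoint D.edgeSet H.edgeSet := by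
  rw [Set.disjoint_left]
  intro e he1 he2
  induction e with
  | _ x y =>
    rw [SimpleGraph.mem_edgeSet] at he1 he2
    have := hD x y he1
    have := hH x y he2
    tauto

lemma ncard_edgeSet_sup {D H : SimpleGraph (Fin a × Fin b)} (hD : DiagOnly D)
    (hH : NondiagOnly H) :
    (D ⊔ H).edgeSet.ncard = D.edgeSet.ncard + H.edgeSet.ncard := by
  rw [SimpleGraph.edgeSet_sup]
  exact Set.ncard_union_eq (disjoint_edgeSets hD hH) (Set.toFinite _) (Set.toFinite _)

lemma ncard_parts (G : SimpleGraph (Fin a × Fin b)) :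
    (Dpart G).edgeSet.ncard + (Npart G).edgeSet.ncard = G.edgeSet.ncard := by
  conv_rhs => rw [← Dpart_sup_Npart G]
  exact (ncard_edgeSet_sup (diagOnly_Dpart G) (nondiagOnly_Npart G)).symm

lemma nondiag_pt_adj {H : SimpleGraph (Fin a × Fin b)} (hH : NondiagOnly H)
    (v w : Fin a × Fin b) : H.Adj (w.1, v.2) (v.1, w.2) ↔ H.Adj v w := by
  obtain ⟨v1, v2⟩ := v
  obtain ⟨w1, w2⟩ := w
  simp only
  constructor
  · intro h
    rcases hH _ _ h with h1 | h2
    · simp only at h1; subst h1; exact h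
    · simp only at h2; subst h2; exact h.symm
  · intro h
    rcases hH _ _ h with h1 | h2
    · simp only at h1; subst h1; exact h
    · simp only at h2; subst h2; exact h.symm

lemma degCrit_iff (G : SimpleGraph (Fin a × Fin b)) : DegCrit G ↔ DegCrit (Dpart G) := by
  have key : ∀ v : Fin a × Fin b,
      (G.neighborSet v).ncard = ((Dpart G).neighborSet v).ncard + ((Npart G).neighborSet v).ncard
      ∧ ((PartialTranspose G).neighborSet v).ncard
        = ((PartialTranspose (Dpart G)).neighborSet v).ncard + ((Npart G).neighborSet v).ncard := by
    intro v
    constructor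
    · have hu : G.neighborSet v = (Dpart G).neighborSet v ∪ (Npart G).neighborSet v := by
        ext w
        simp only [SimpleGraph.mem_neighborSet, Set.mem_union, Dpart, Npart]
        by_cases h1 : v.1 = w.1 <;> by_cases h2 : v.2 = w.2 <;> tauto
      have hd : Disjoint ((Dpart G).neighborSet v) ((Npart G).neighborSet v) := by
        rw [Set.disjoint_left]
        intro w h1 h2
        simp only [SimpleGraph.mem_neighborSet, Dpart, Npart] at h1 h2
        tauto
      rw [hu]
      exact Set.ncard_union_eq hd (Set.toFinite _) (Set.toFinite _)
    · have hu : (PartialTranspose G).neighborSet v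
          = (PartialTranspose (Dpart G)).neighborSet v ∪ (Npart G).neighborSet v := by
        ext w
        simp only [SimpleGraph.mem_neighborSet, Set.mem_union]
        show G.Adj (w.1, v.2) (v.1, w.2) ↔ (Dpart G).Adj (w.1, v.2) (v.1, w.2) ∨ (Npart G).Adj v w
        rw [← nondiag_pt_adj (nondiagOnly_Npart G) v w]
        simp only [Dpart, Npart]
        by_cases h1 : w.1 = v.1 <;> by_cases h2 : v.2 = w.2 <;> tauto
      have hd : Disjoint ((PartialTranspose (Dpart G)).neighborSet v) ((Npart G).neighborSet v) := by
        rw [Set.disjoint_left]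
        intro w h1 h2
        simp only [SimpleGraph.mem_neighborSet, PartialTranspose, Dpart, Npart] at h1 h2
        obtain ⟨-, hne1, hne2⟩ := h1
        rcases h2.2 with h | h
        · exact hne1 h.symm
        · exact hne2 h
      rw [hu]
      exact Set.ncard_union_eq hd (Set.toFinite _) (Set.toFinite _)
  constructor
  · intro h v
    have := key v
    have := h v
    omega
  · intro h v
    have := key v
    have := h v
    omega

end Aux

section Count

variable {a b : ℕ}

/-- the complete "non-diagonal" graph: all horizontal and vertical edges -/
def Kgr (a b : ℕ) : SimpleGraph (Fin a × Fin b) where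
  Adj v w := v ≠ w ∧ (v.1 = w.1 ∨ v.2 = w.2)
  symm := ⟨fun v w ⟨h, h'⟩ => ⟨h.symm, by tauto⟩⟩
  loopless := ⟨fun v h => h.1 rfl⟩

instance : DecidableRel (Kgr a b).Adj := fun v w =>
  inferInstanceAs (Decidable (v ≠ w ∧ (v.1 = w.1 ∨ v.2 = w.2)))

lemma nondiag_le {H : SimpleGraph (Fin a × Fin b)} : NondiagOnly H ↔ H ≤ Kgr a b := by
  constructor
  · intro h v w hadj
    exact ⟨hadj.ne, h v w hadj⟩
  · intro h v w hadj
    exact (h hadj).2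

lemma degree_Kgr (v : Fin a × Fin b) :
    (Kgr a b).degree v = (b - 1) + (a - 1) := by
  classical
  rw [← SimpleGraph.card_neighborFinset_eq_degree]
  have hsplit : (Kgr a b).neighborFinset v
      = Finset.univ.filter (fun w => v ≠ w ∧ v.1 = w.1)
        ∪ Finset.univ.filter (fun w => v ≠ w ∧ v.2 = w.2) := by
    ext w
    rw [SimpleGraph.mem_neighborFinset]
    simp only [SimpleGraph.mem_neighborFinset, Finset.mem_union, Finset.mem_filter,
      Finset.mem_univ, true_and, Kgr]
    tauto
  have hdisj : Disjoint (Finset.univ.filter (fun w : Fin a × Fin b => v ≠ w ∧ v.1 = w.1))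
      (Finset.univ.filter (fun w => v ≠ w ∧ v.2 = w.2)) := by
    rw [Finset.disjoint_left]
    intro w h1 h2
    simp only [Finset.mem_filter, Finset.mem_univ, true_and] at h1 h2
    exact h1.1 (Prod.ext h1.2 h2.2)
  have h1 : (Finset.univ.filter (fun w : Fin a × Fin b => v ≠ w ∧ v.1 = w.1)).card
      = ((Finset.univ : Finset (Fin b)).erase v.2).card := by
    refine Finset.card_bij' (fun w _ => w.2) (fun c _ => (v.1, c)) ?_ ?_ ?_ ?_
    · intro w hw
      simp only [Finset.mem_filter, Finset.mem_univ, true_and] at hw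
      exact Finset.mem_erase.2 ⟨fun h => hw.1 (Prod.ext hw.2 h.symm), Finset.mem_univ _⟩
    · intro c hc
      simp only [Finset.mem_filter, Finset.mem_univ, true_and]
      exact ⟨fun h => (Finset.mem_erase.1 hc).1 (congrArg Prod.snd h).symm, trivial⟩
    · intro w hw
      simp only [Finset.mem_filter, Finset.mem_univ, true_and] at hw
      exact Prod.ext hw.2 rfl
    · intro c hc
      rfl
  have h2 : (Finset.univ.filter (fun w : Fin a × Fin b => v ≠ w ∧ v.2 = w.2)).card
      = ((Finset.univ : Finset (Fin a)).erase v.1).card := by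
    refine Finset.card_bij' (fun w _ => w.1) (fun c _ => (c, v.2)) ?_ ?_ ?_ ?_
    · intro w hw
      simp only [Finset.mem_filter, Finset.mem_univ, true_and] at hw
      exact Finset.mem_erase.2 ⟨fun h => hw.1 (Prod.ext h.symm hw.2), Finset.mem_univ _⟩
    · intro c hc
      simp only [Finset.mem_filter, Finset.mem_univ, true_and]
      exact ⟨fun h => (Finset.mem_erase.1 hc).1 (congrArg Prod.fst h).symm, trivial⟩
    · intro w hw
      simp only [Finset.mem_filter, Finset.mem_univ, true_and] at hw
      exact Prod.ext rfl hw.2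
    · intro c hc
      rfl
  rw [hsplit, Finset.card_union_of_disjoint hdisj, h1, h2,
    Finset.card_erase_of_mem (Finset.mem_univ _), Finset.card_erase_of_mem (Finset.mem_univ _),
    Finset.card_univ, Finset.card_univ, Fintype.card_fin, Fintype.card_fin]

lemma card_Kgr (ha : 1 ≤ a) (hb : 1 ≤ b) :
    (Kgr a b).edgeFinset.card = a * b * (a + b) / 2 - a * b := by
  classical
  have hsum := SimpleGraph.sum_degrees_eq_twice_card_edges (Kgr a b)
  have hdeg : ∑ v : Fin a × Fin b, (Kgr a b).degree v
      = (a * b) * ((b - 1) + (a - 1)) := by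
    rw [Finset.sum_congr rfl (fun v _ => degree_Kgr v), Finset.sum_const, Finset.card_univ,
      Fintype.card_prod, Fintype.card_fin, Fintype.card_fin, smul_eq_mul]
  have key : a * b * (a + b) = 2 * (Kgr a b).edgeFinset.card + 2 * (a * b) := by
    have e1 : a + b = ((b - 1) + (a - 1)) + 2 := by omega
    have e2 : a * b * (((b - 1) + (a - 1)) + 2)
        = a * b * ((b - 1) + (a - 1)) + 2 * (a * b) := by ring
    rw [e1, e2, ← hdeg, hsum]
  omega

lemma ncard_eq_edgeFinset (H : SimpleGraph (Fin a × Fin b)) [Fintype ↑H.edgeSet] :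
    H.edgeFinset.card = H.edgeSet.ncard :=
  (Set.ncard_eq_toFinset_card' _).symm

lemma count_nondiag (j : ℕ) :
    Nat.card {H : SimpleGraph (Fin a × Fin b) // NondiagOnly H ∧ H.edgeSet.ncard = j}
      = ((Kgr a b).edgeFinset.card).choose j := by
  classical
  rw [← Finset.card_powersetCard, ← Fintype.card_coe, Nat.card_eq_fintype_card]
  apply Fintype.card_congr
  have hfact : ∀ s : Finset (Sym2 (Fin a × Fin b)),
      s ⊆ (Kgr a b).edgeFinset →
      (SimpleGraph.fromEdgeSet (↑s : Set (Sym2 (Fin a × Fin b)))).edgeSet = ↑s := by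
    intro s hs
    rw [SimpleGraph.edgeSet_fromEdgeSet]
    ext e
    simp only [Set.mem_diff, Set.mem_setOf_eq, and_iff_left_iff_imp]
    intro he
    have hK : e ∈ (Kgr a b).edgeSet := by
      rw [← SimpleGraph.coe_edgeFinset]
      exact_mod_cast hs he
    exact (Kgr a b).not_isDiag_of_mem_edgeSet hK
  refine
    { toFun := fun H => ⟨H.1.edgeFinset, ?_⟩
      invFun := fun s => ⟨SimpleGraph.fromEdgeSet ↑s.1, ?_, ?_⟩
      left_inv := ?_
      right_inv := ?_ }
  · rw [Finset.mem_powersetCard]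
    refine ⟨SimpleGraph.edgeFinset_subset_edgeFinset.2 (nondiag_le.1 H.2.1), ?_⟩
    rw [ncard_eq_edgeFinset]
    exact H.2.2
  · intro v w h
    have hK : s(v, w) ∈ (Kgr a b).edgeSet := by
      rw [← SimpleGraph.coe_edgeFinset]
      exact_mod_cast (Finset.mem_powersetCard.1 s.2).1 ((SimpleGraph.fromEdgeSet_adj _).1 h).1
    exact ((Kgr a b).mem_edgeSet.1 hK).2
  · rw [hfact s.1 (Finset.mem_powersetCard.1 s.2).1, Set.ncard_coe_finset]
    exact (Finset.mem_powersetCard.1 s.2).2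
  · intro H
    apply Subtype.ext
    dsimp only
    rw [SimpleGraph.coe_edgeFinset, SimpleGraph.fromEdgeSet_edgeSet]
  · intro s
    apply Subtype.ext
    dsimp only
    apply Finset.coe_injective
    rw [SimpleGraph.coe_edgeFinset, hfact s.1 (Finset.mem_powersetCard.1 s.2).1]

end Count


section Main

variable {a b : ℕ}

lemma degCrit_bot : DegCrit (⊥ : SimpleGraph (Fin a × Fin b)) := by
  intro v
  have h1 : (⊥ : SimpleGraph (Fin a × Fin b)).neighborSet v = ∅ := by
    ext w; simp
  have h2 : (PartialTranspose (⊥ : SimpleGraph (Fin a × Fin b))).neighborSet v = ∅ := by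
    ext w
    simp only [SimpleGraph.mem_neighborSet, Set.mem_empty_iff_false, iff_false]
    exact fun h => h
  rw [h1, h2]

lemma eq_bot_of_ncard_zero {G : SimpleGraph (Fin a × Fin b)} (h : G.edgeSet.ncard = 0) :
    G = ⊥ := by
  rw [← SimpleGraph.edgeSet_eq_empty]
  exact (Set.ncard_eq_zero (Set.toFinite _)).1 h

lemma Dnum_zero : Dnum a b 0 = 1 := by
  unfold Dnum
  haveI : Unique {G : SimpleGraph (Fin a × Fin b) //
      G.edgeSet.ncard = 0 ∧ (∀ v w : Fin a × Fin b, G.Adj v w → v.1 ≠ w.1 ∧ v.2 ≠ w.2) ∧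
        DegCrit G} := by
    refine ⟨⟨⟨⊥, ?_, ?_, degCrit_bot⟩⟩, ?_⟩
    · simp
    · intro v w h
      simp at h
    · intro G
      exact Subtype.ext (eq_bot_of_ncard_zero G.2.1)
  exact Nat.card_unique

lemma Dnum_one : Dnum a b 1 = 0 := by
  unfold Dnum
  haveI : IsEmpty {G : SimpleGraph (Fin a × Fin b) //
      G.edgeSet.ncard = 1 ∧ (∀ v w : Fin a × Fin b, G.Adj v w → v.1 ≠ w.1 ∧ v.2 ≠ w.2) ∧
        DegCrit G} := by
    refine ⟨fun X => ?_⟩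
    obtain ⟨G, h1, hdiag, hc⟩ := X
    obtain ⟨e, he⟩ := Set.ncard_eq_one.1 h1
    induction e using Sym2.ind with
    | _ v w =>
      have hadj : G.Adj v w := by
        rw [← SimpleGraph.mem_edgeSet, he]
        exact Set.mem_singleton _
      obtain ⟨hne1, hne2⟩ := hdiag v w hadj
      have hempty : (PartialTranspose G).neighborSet v = ∅ := by
        ext u
        simp only [SimpleGraph.mem_neighborSet, Set.mem_empty_iff_false, iff_false]
        intro h
        have : s((u.1, v.2), (v.1, u.2)) ∈ G.edgeSet := (SimpleGraph.mem_edgeSet G).2 h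
        rw [he, Set.mem_singleton_iff, Sym2.eq_iff] at this
        rcases this with ⟨hx, hy⟩ | ⟨hx, hy⟩
        · exact hne1 (show (v.1, u.2).1 = w.1 from congrArg Prod.fst hy)
        · exact hne2 (show (u.1, v.2).2 = w.2 from congrArg Prod.snd hx)
      have hpos : 0 < (G.neighborSet v).ncard :=
        (Set.ncard_pos (Set.toFinite _)).2 ⟨w, hadj⟩
      have := hc v
      rw [hempty, Set.ncard_empty] at this
      omega
  exact Nat.card_of_isEmpty

/-- The key splitting equivalence. -/
def splitEquiv (a b k i : ℕ) (hik : i ≤ k) :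
    {G : SimpleGraph (Fin a × Fin b) //
      (G.edgeSet.ncard = k ∧ DegCrit G) ∧ (Dpart G).edgeSet.ncard = i} ≃
    {D : SimpleGraph (Fin a × Fin b) // DiagOnly D ∧ D.edgeSet.ncard = i ∧ DegCrit D} ×
    {H : SimpleGraph (Fin a × Fin b) // NondiagOnly H ∧ H.edgeSet.ncard = k - i} where
  toFun G :=
    (⟨Dpart G.1, diagOnly_Dpart _, G.2.2, (degCrit_iff G.1).1 G.2.1.2⟩,
     ⟨Npart G.1, nondiagOnly_Npart _, by
        have h := ncard_parts G.1
        have h1 : G.1.edgeSet.ncard = k := G.2.1.1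
        have h2 : (Dpart G.1).edgeSet.ncard = i := G.2.2
        omega⟩)
  invFun DH :=
    ⟨DH.1.1 ⊔ DH.2.1, by
      have hD1 : DiagOnly DH.1.1 := DH.1.2.1
      have hH1 : NondiagOnly DH.2.1 := DH.2.2.1
      have hD2 : DH.1.1.edgeSet.ncard = i := DH.1.2.2.1
      have hH2 : DH.2.1.edgeSet.ncard = k - i := DH.2.2.2
      have hD3 : DegCrit DH.1.1 := DH.1.2.2.2
      refine ⟨⟨?_, ?_⟩, ?_⟩
      · rw [ncard_edgeSet_sup hD1 hH1, hD2, hH2]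
        omega
      · rw [degCrit_iff, Dpart_sup hD1 hH1]
        exact hD3
      · rw [Dpart_sup hD1 hH1]
        exact hD2⟩
  left_inv G := Subtype.ext (Dpart_sup_Npart G.1)
  right_inv DH := by
    have hD1 : DiagOnly DH.1.1 := DH.1.2.1
    have hH1 : NondiagOnly DH.2.1 := DH.2.2.1
    refine Prod.ext (Subtype.ext ?_) (Subtype.ext ?_)
    · exact Dpart_sup hD1 hH1
    · exact Npart_sup hD1 hH1


set_option maxHeartbeats 400000 in
lemma Pnum_eq (a b k : ℕ) :
    Pnum a b k = ∑ i ∈ Finset.range (k + 1),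
      Dnum a b i * ((Kgr a b).edgeFinset.card).choose (k - i) := by
  classical
  unfold Pnum
  rw [Nat.card_eq_fintype_card, Fintype.card_subtype]
  rw [Finset.card_eq_sum_card_fiberwise
    (f := fun G => (Dpart G).edgeSet.ncard) (t := Finset.range (k + 1))
    (by
      intro G hG
      simp only [Finset.coe_filter, Set.mem_setOf_eq, Finset.mem_univ, true_and] at hG
      have h := ncard_parts G
      have h1 := hG.1
      rw [Finset.mem_coe, Finset.mem_range]
      show (Dpart G).edgeSet.ncard < k + 1
      omega)]
  apply Finset.sum_congr rfl
  intro i hi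
  have hik : i ≤ k := Nat.lt_succ_iff.1 (Finset.mem_range.1 hi)
  rw [Finset.filter_filter, ← Fintype.card_subtype,
    Fintype.card_congr (splitEquiv a b k i hik), Fintype.card_prod]
  have hD : Nat.card {D : SimpleGraph (Fin a × Fin b) //
      DiagOnly D ∧ D.edgeSet.ncard = i ∧ DegCrit D} = Dnum a b i := by
    unfold Dnum
    exact Nat.card_congr (Equiv.subtypeEquivRight fun G =>
      ⟨fun ⟨h1, h2, h3⟩ => ⟨h2, h1, h3⟩, fun ⟨h1, h2, h3⟩ => ⟨h2, h1, h3⟩⟩)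
  rw [← Nat.card_eq_fintype_card, ← Nat.card_eq_fintype_card, count_nondiag, hD]


theorem statement15 (a b k : ℕ) (ha : 1 ≤ a) (hb : 1 ≤ b) :
    Pnum a b k =
      Nat.choose (a * b * (a + b) / 2 - a * b) k +
        ∑ i ∈ Finset.Icc 2 k,
          Dnum a b i * Nat.choose (a * b * (a + b) / 2 - a * b) (k - i) := by
  classical
  rw [← card_Kgr ha hb, Pnum_eq a b k]
  rcases Nat.eq_zero_or_pos k with hk | hk
  · subst hk
    simp [Dnum_zero]
  · have hset : Finset.range (k + 1) = insert 0 (insert 1 (Finset.Icc 2 k)) := by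
      ext x
      simp only [Finset.mem_range, Finset.mem_insert, Finset.mem_Icc]
      omega
    rw [hset, Finset.sum_insert (by simp), Finset.sum_insert (by simp),
      Dnum_zero, Dnum_one]
    simp
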